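/- Let χ̂ : {1,…,n′} → {ℓ,r,b} with ℓ-r-replacement χ : {1,…,n} → {ℓ,r}. Then for all π, σ ∈ BNC_ffb(χ̂) with π ≤ σ, one has Σ_{τ ∈ BNC_ffb(χ̂), π ≤ τ ≤ σ} μ_BNC(τ,σ) = Σ_{τ ∈ BNC_ffb(χ̂), π ≤ τ ≤ σ} μ_BNC(π,τ) = 1 if π = σ and = 0 otherwise; that is, the bi-non-crossing Möbius function restricted to BNC_ffb(χ̂) satisfies the defining relations of a Möbius function on BNC_ffb(χ̂). -/
import Mathlib


/-! Basic combinatorics of bi-non-crossing partitions. -/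

/-- The two sides: left and right. -/
inductive LRside : Type
  | l : LRside
  | r : LRside
deriving DecidableEq

/-- A partition (encoded as a setoid, i.e. by the equivalence relation whose classes
are the blocks) is *non-crossing* if there are no `a₁ < b₁ < a₂ < b₂` with
`a₁ ∼ a₂`, `b₁ ∼ b₂` but `a₁ ≁ b₁`. -/
def NonCrossing {n : ℕ} (π : Setoid (Fin n)) : Prop :=
  ∀ a b c d : Fin n, a < b → b < c → c < d → π.r a c → π.r b d → π.r a b

/-- The list underlying the permutation `s_χ`: the elements of `χ⁻¹({ℓ})` in increasing
order, followed by the elements of `χ⁻¹({r})` in decreasing order. -/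
def sChiList {n : ℕ} (χ : Fin n → LRside) : List (Fin n) :=
  ((List.finRange n).filter fun i => χ i = LRside.l) ++
    (((List.finRange n).filter fun i => χ i = LRside.r).reverse)

lemma sChiList_length {n : ℕ} (χ : Fin n → LRside) : (sChiList χ).length = n := by
  have key : ∀ L : List (Fin n),
      (L.filter fun i => χ i = LRside.l).length +
        (L.filter fun i => χ i = LRside.r).length = L.length := by
    intro L
    induction L with
    | nil => simp
    | cons a t ih =>
      cases h : χ a <;> simp [List.filter_cons, h] <;> omega
  have := key (List.finRange n)
  simp only [sChiList, List.length_append, List.length_reverse]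
  simpa [List.length_finRange] using this

lemma sChiList_nodup {n : ℕ} (χ : Fin n → LRside) : (sChiList χ).Nodup := by
  refine List.Nodup.append ((List.nodup_finRange n).filter _)
    (List.nodup_reverse.mpr ((List.nodup_finRange n).filter _)) ?_
  intro a ha hb
  simp only [List.mem_filter, List.mem_reverse, decide_eq_true_eq] at ha hb
  rw [ha.2] at hb
  exact absurd hb.2 (by simp)

/-- The permutation `s_χ`. -/
noncomputable def sChi {n : ℕ} (χ : Fin n → LRside) : Equiv.Perm (Fin n) :=
  Equiv.ofBijective (fun j => (sChiList χ).get (Fin.cast (sChiList_length χ).symm j))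
    (by
      rw [Fintype.bijective_iff_injective_and_card]
      refine ⟨fun a b hab => ?_, rfl⟩
      have := List.Nodup.get_inj_iff (sChiList_nodup χ) |>.mp hab
      exact Fin.cast_injective _ this)

/-- The set of bi-non-crossing partitions with respect to `χ`: those `π` such that
`s_χ⁻¹ ⋅ π` (whose blocks are the preimages under `s_χ` of the blocks of `π`) is
non-crossing. -/
noncomputable def BNC {n : ℕ} (χ : Fin n → LRside) : Set (Setoid (Fin n)) :=
  {π | NonCrossing (Setoid.comap (sChi χ) π)}

/-! The ℓ-r-replacement of a map into `{ℓ, r, b}`. -/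

/-- The three labels: left, right, boolean. -/
inductive LRB : Type
  | l : LRB
  | r : LRB
  | b : LRB
deriving DecidableEq

/-- The number of indices coloured `b` by `χ̂`. -/
def countB {n' : ℕ} (χh : Fin n' → LRB) : ℕ :=
  (Finset.univ.filter fun i => χh i = LRB.b).card

/-- The map `f(i) = i + |χ̂⁻¹({b}) ∩ [1, i−1]|` (with indices taken `0`-based). -/
def fMap {n' : ℕ} (χh : Fin n' → LRB) (i : Fin n') : Fin (n' + countB χh) :=
  ⟨i + (Finset.univ.filter fun j => j < i ∧ χh j = LRB.b).card, by
    have h1 : (Finset.univ.filter fun j => j < i ∧ χh j = LRB.b).card ≤ countB χh := by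
      apply Finset.card_le_card
      intro x hx
      simp only [Finset.mem_filter, Finset.mem_univ, true_and] at hx ⊢
      exact hx.2
    have h2 := i.isLt
    omega⟩

/-- `χ` is the ℓ-r-replacement of `χ̂`: it agrees with `χ̂` along `f` on non-`b` indices,
and replaces each `b` index by the consecutive pair `ℓ, r`. (These conditions determine
`χ` uniquely.) -/
def IsReplacement {n' : ℕ} (χh : Fin n' → LRB)
    (χ : Fin (n' + countB χh) → LRside) : Prop :=
  ∀ i : Fin n',
    (χh i = LRB.l → χ (fMap χh i) = LRside.l) ∧
    (χh i = LRB.r → χ (fMap χh i) = LRside.r) ∧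
    (χh i = LRB.b → χ (fMap χh i) = LRside.l ∧
      ∀ h : (fMap χh i : ℕ) + 1 < n' + countB χh, χ ⟨(fMap χh i : ℕ) + 1, h⟩ = LRside.r)

/-- `BNC_ffb(χ̂)`: the bi-non-crossing partitions `π ∈ BNC(χ)` such that whenever
`i ∈ f(χ̂⁻¹({b}))` lies in a block `V` of `π`, then also `i+1 ∈ V`. -/
noncomputable def BNCffb {n' : ℕ} (χh : Fin n' → LRB)
    (χ : Fin (n' + countB χh) → LRside) : Set (Setoid (Fin (n' + countB χh))) :=
  {π | π ∈ BNC χ ∧ ∀ i : Fin n', χh i = LRB.b →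
    ∀ h : (fMap χh i : ℕ) + 1 < n' + countB χh,
      π.r (fMap χh i) ⟨(fMap χh i : ℕ) + 1, h⟩}

open scoped BigOperators Classical

/-- `μ` is the bi-non-crossing Möbius function on `BNC(χ)`: it vanishes off the
refinement order, and satisfies the two defining (convolution) relations on intervals
of `BNC(χ)`. -/
noncomputable def IsMobiusBNC {n : ℕ} (χ : Fin n → LRside)
    (μ : Setoid (Fin n) → Setoid (Fin n) → ℂ) : Prop :=
  (∀ π σ : Setoid (Fin n), ¬ π ≤ σ → μ π σ = 0) ∧
  (∀ π σ : Setoid (Fin n), π ∈ BNC χ → σ ∈ BNC χ → π ≤ σ →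
    (∑ᶠ τ ∈ {τ : Setoid (Fin n) | τ ∈ BNC χ ∧ π ≤ τ ∧ τ ≤ σ}, μ τ σ) =
      if π = σ then 1 else 0) ∧
  (∀ π σ : Setoid (Fin n), π ∈ BNC χ → σ ∈ BNC χ → π ≤ σ →
    (∑ᶠ τ ∈ {τ : Setoid (Fin n) | τ ∈ BNC χ ∧ π ≤ τ ∧ τ ≤ σ}, μ π τ) =
      if π = σ then 1 else 0)

/-- The bi-non-crossing Möbius function, restricted to
`BNC_ffb(χ̂)`, satisfies the defining relations of a Möbius function on
`BNC_ffb(χ̂)`. -/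
theorem statement2 {n' : ℕ} (χh : Fin n' → LRB)
    (χ : Fin (n' + countB χh) → LRside) (hχ : IsReplacement χh χ)
    (μ : Setoid (Fin (n' + countB χh)) → Setoid (Fin (n' + countB χh)) → ℂ)
    (hμ : IsMobiusBNC χ μ)
    (π σ : Setoid (Fin (n' + countB χh)))
    (hπ : π ∈ BNCffb χh χ) (hσ : σ ∈ BNCffb χh χ) (hle : π ≤ σ) :
    ((∑ᶠ τ ∈ {τ : Setoid (Fin (n' + countB χh)) | τ ∈ BNCffb χh χ ∧ π ≤ τ ∧ τ ≤ σ},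
        μ τ σ) = if π = σ then 1 else 0) ∧
    ((∑ᶠ τ ∈ {τ : Setoid (Fin (n' + countB χh)) | τ ∈ BNCffb χh χ ∧ π ≤ τ ∧ τ ≤ σ},
        μ π τ) = if π = σ then 1 else 0) := by
  have hset : {τ : Setoid (Fin (n' + countB χh)) | τ ∈ BNCffb χh χ ∧ π ≤ τ ∧ τ ≤ σ}
      = {τ : Setoid (Fin (n' + countB χh)) | τ ∈ BNC χ ∧ π ≤ τ ∧ τ ≤ σ} := by
    ext τ
    simp only [Set.mem_setOf_eq]
    constructor
    · rintro ⟨⟨h1, _⟩, h2, h3⟩; exact ⟨h1, h2, h3⟩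
    · rintro ⟨h1, h2, h3⟩
      exact ⟨⟨h1, fun i hi h => h2 (hπ.2 i hi h)⟩, h2, h3⟩
  rw [hset]
  exact ⟨hμ.2.1 π σ hπ.1 hσ.1 hle, hμ.2.2 π σ hπ.1 hσ.1 hle⟩
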